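/- arXiv:1006.0253 — 3 statements merged into one kernel-verified Lean document; each statement's English description precedes it below -/
import Mathlib

section
/- Let s ≥ 0, β ∈ (1/2, 1). There exists a constant C = C(s, β) such that for all nonzero l, m, k ∈ ℤ² with l + m + k = 0 and |l| ≤ |m| ≤ |k|, one has | |k|^{2s}/|m|^{2β} − |m|^{2s}/|k|^{2β} | ≤ C |l|^{1−2β} |m|^{s−1} |k|^{s}. -/
/-!
Over the common denominator `|m|^{2β} |k|^{2β}` the numerator is `|k|^p - |m|^p` with
`p = 2s + 2β ≥ 1`, which by convexity of `t ↦ t^p` is at most `p |k|^{p-1} (|k| - |m|)`, and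
`|k| - |m| ≤ |l|` by the triangle inequality applied to `k = -(l + m)`. The remaining powers are
redistributed using `|l| ≤ |m|` (to trade `|l| / |m|^{2β}` for `|l|^{1-2β}`) and `|m| ≤ |k| ≤ 2|m|`
(to trade `|k|^{s-1}` for `2^s |m|^{s-1}`).
-/

/-- The Euclidean norm of a lattice vector in ℤ². -/
noncomputable def znorm (v : ℤ × ℤ) : ℝ := Real.sqrt ((v.1 : ℝ) ^ 2 + (v.2 : ℝ) ^ 2)

open Real

lemma znorm_eq_norm (v : ℤ × ℤ) : znorm v = ‖((v.1 : ℝ) + (v.2 : ℝ) * Complex.I : ℂ)‖ :=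
  (Complex.norm_add_mul_I _ _).symm

lemma znorm_pos {v : ℤ × ℤ} (hv : v ≠ 0) : 0 < znorm v := by
  rw [znorm_eq_norm, norm_pos_iff]
  intro h
  apply hv
  have h1 := congrArg Complex.re h
  have h2 := congrArg Complex.im h
  simp only [Complex.add_re, Complex.add_im, Complex.ofReal_re, Complex.ofReal_im,
    Complex.mul_re, Complex.mul_im, Complex.I_re, Complex.I_im] at h1 h2
  ext <;> simp_all

lemma znorm_le_add_of_add_add_eq_zero {l m k : ℤ × ℤ} (h : l + m + k = 0) :
    znorm k ≤ znorm l + znorm m := by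
  have hk : ((k.1 : ℝ) + (k.2 : ℝ) * Complex.I : ℂ) =
      -(((l.1 : ℝ) + (l.2 : ℝ) * Complex.I) + ((m.1 : ℝ) + (m.2 : ℝ) * Complex.I)) := by
    rw [eq_neg_of_add_eq_zero_right h]
    simp only [Prod.fst_neg, Prod.snd_neg, Prod.fst_add, Prod.snd_add]
    push_cast; ring
  rw [znorm_eq_norm, znorm_eq_norm, znorm_eq_norm, hk, norm_neg]
  exact norm_add_le _ _

/-- Bernoulli's inequality `(x / y) ^ p ≥ 1 + p (x / y - 1)`, multiplied by `y ^ p`. -/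
lemma rpow_sub_rpow_le_mul_rpow_sub_one_mul_sub {p x y : ℝ} (hp : 1 ≤ p) (hx : 0 ≤ x)
    (hy : 0 < y) : y ^ p - x ^ p ≤ p * y ^ (p - 1) * (y - x) := by
  have hbern := one_add_mul_self_le_rpow_one_add (s := x / y - 1)
    (by linarith [div_nonneg hx hy.le]) hp
  rw [add_sub_cancel, div_rpow hx hy.le, le_div_iff₀ (by positivity)] at hbern
  have hyp : y ^ p = y ^ (p - 1) * y := by rw [← rpow_add_one hy.ne', sub_add_cancel]
  rw [hyp] at hbern ⊢
  field_simp at hbern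
  nlinarith

lemma rpow_sub_one_le_two_rpow_mul {s x y : ℝ} (hs : 0 ≤ s) (hx : 0 < x) (hxy : x ≤ y)
    (hy : y ≤ 2 * x) : y ^ (s - 1) ≤ 2 ^ s * x ^ (s - 1) := by
  have hy0 : 0 < y := hx.trans_le hxy
  calc y ^ (s - 1) = y ^ s / y := rpow_sub_one hy0.ne' s
    _ ≤ (2 * x) ^ s / x := by gcongr
    _ = 2 ^ s * x ^ (s - 1) := by rw [mul_rpow zero_le_two hx.le, rpow_sub_one hx.ne']; ring

lemma div_rpow_le_rpow_one_sub {a x y : ℝ} (ha : 0 ≤ a) (hx : 0 < x) (hxy : x ≤ y) :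
    x / y ^ a ≤ x ^ (1 - a) := by
  calc x / y ^ a ≤ x / x ^ a := by gcongr
    _ = x ^ (1 - a) := by rw [rpow_sub hx, rpow_one]

theorem abs_rpow_div_rpow_sub_rpow_div_rpow_le {s β L M K : ℝ} (hs : 0 ≤ s) (hβ : 1 / 2 ≤ β)
    (hL : 0 < L) (hLM : L ≤ M) (hMK : M ≤ K) (hKLM : K ≤ L + M) :
    |K ^ (2 * s) / M ^ (2 * β) - M ^ (2 * s) / K ^ (2 * β)| ≤
      (2 * s + 2 * β) * 2 ^ s * L ^ (1 - 2 * β) * M ^ (s - 1) * K ^ s := by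
  set p := 2 * s + 2 * β
  have hM : 0 < M := hL.trans_le hLM
  have hK : 0 < K := hM.trans_le hMK
  have hmono : M ^ (2 * s) / K ^ (2 * β) ≤ K ^ (2 * s) / M ^ (2 * β) := by gcongr
  have hdiff : K ^ (2 * s) / M ^ (2 * β) - M ^ (2 * s) / K ^ (2 * β) =
      (K ^ p - M ^ p) / (M ^ (2 * β) * K ^ (2 * β)) := by
    rw [rpow_add hK, rpow_add hM]
    field_simp
  have hnum : K ^ p - M ^ p ≤ p * K ^ (p - 1) * L :=
    (rpow_sub_rpow_le_mul_rpow_sub_one_mul_sub (by linarith) hM.le hK).trans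
      (by gcongr; linarith)
  have hKpow : K ^ (p - 1) = K ^ (s - 1) * K ^ s * K ^ (2 * β) := by
    rw [← rpow_add hK, ← rpow_add hK]; congr 1; ring
  rw [abs_of_nonneg (sub_nonneg.2 hmono), hdiff]
  calc (K ^ p - M ^ p) / (M ^ (2 * β) * K ^ (2 * β))
      ≤ p * K ^ (p - 1) * L / (M ^ (2 * β) * K ^ (2 * β)) := by gcongr
    _ = p * (L / M ^ (2 * β)) * K ^ (s - 1) * K ^ s := by
        rw [hKpow]; field_simp
    _ ≤ p * L ^ (1 - 2 * β) * (2 ^ s * M ^ (s - 1)) * K ^ s := by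
        gcongr
        · exact div_rpow_le_rpow_one_sub (by linarith) hL hLM
        · exact rpow_sub_one_le_two_rpow_mul hs hM hMK (by linarith)
    _ = p * 2 ^ s * L ^ (1 - 2 * β) * M ^ (s - 1) * K ^ s := by ring

theorem symmetrization_estimate_one_general (s β : ℝ) (hs : 0 ≤ s) (hβ1 : 1 / 2 < β) :
    ∃ C : ℝ, 0 < C ∧ ∀ l m k : ℤ × ℤ, l ≠ 0 → m ≠ 0 → k ≠ 0 → l + m + k = 0 →
      znorm l ≤ znorm m → znorm m ≤ znorm k →
      |znorm k ^ (2 * s) / znorm m ^ (2 * β) - znorm m ^ (2 * s) / znorm k ^ (2 * β)| ≤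
        C * znorm l ^ (1 - 2 * β) * znorm m ^ (s - 1) * znorm k ^ s := by
  refine ⟨(2 * s + 2 * β) * 2 ^ s, by positivity, ?_⟩
  intro l m k hl _ _ hsum hLM hMK
  exact abs_rpow_div_rpow_sub_rpow_div_rpow_le hs hβ1.le (znorm_pos hl) hLM hMK
    (znorm_le_add_of_add_add_eq_zero hsum)

theorem symmetrization_estimate_one (s β : ℝ) (hs : 0 ≤ s) (hβ1 : 1 / 2 < β) (hβ2 : β < 1) :
    ∃ C : ℝ, 0 < C ∧ ∀ l m k : ℤ × ℤ, l ≠ 0 → m ≠ 0 → k ≠ 0 → l + m + k = 0 →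
      znorm l ≤ znorm m → znorm m ≤ znorm k →
      |znorm k ^ (2 * s) / znorm m ^ (2 * β) - znorm m ^ (2 * s) / znorm k ^ (2 * β)| ≤
        C * znorm l ^ (1 - 2 * β) * znorm m ^ (s - 1) * znorm k ^ s :=
  symmetrization_estimate_one_general s β hs hβ1
end

section
/- Let α, β ∈ (1/2, 1) with 1 < α + β < 3/2, δ > 0 small, r ∈ (1, 2), γ > 0 with γ ≤ δ^{2α+2β−1}/2, and let ω be the MOC with ω(ξ) = ξ − ξ^r on [0,δ] and ω'(ξ) = γξ^{1−2α−2β} for ξ > δ. Then for all ξ ≥ δ: γ ≤ ω(ξ) ξ^{2β+2α−2} and ω(2ξ) ≤ (3/2) ω(ξ). -/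
/-!
Beyond `δ` the modulus is `ω(δ) + γ (ξ^p - δ^p) / p` with `p = 2 - 2α - 2β < 0`. Taking `δ` so small
that `δ^r ≤ δ / 4` gives `ω(δ) ≥ 3δ/4`, hence `(3/2) γ ≤ (3/4) δ^(1-p) ≤ ω(δ) δ^(-p) ≤ ω(ξ) ξ^(-p)`,
both factors being increasing. The doubling bound follows because the increment
`ω(2ξ) - ω(ξ) = γ ξ^p (2^p - 1) / p` is at most `γ ξ^p log 2 ≤ (3/4) γ ξ^p ≤ ω(ξ) / 2`.
-/

open Real

/-- The branch of the modulus beyond `δ`: the primitive of `γ η^(p-1)` taking the value `c` at `δ`. -/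
noncomputable def modulusTail (c γ δ p ξ : ℝ) : ℝ := c + γ * (ξ ^ p - δ ^ p) / p

lemma rpow_sub_one_div_le_log {b p : ℝ} (hb : 0 < b) (hp : p < 0) : (b ^ p - 1) / p ≤ log b := by
  rw [div_le_iff_of_neg hp, rpow_def_of_pos hb]
  linarith [add_one_le_exp (log b * p)]

lemma exists_pos_forall_rpow_le_mul {r ε : ℝ} (hr : 1 < r) (hε : 0 < ε) :
    ∃ δ₀ > 0, ∀ δ, 0 < δ → δ ≤ δ₀ → δ ^ r ≤ ε * δ := by
  refine ⟨ε ^ (r - 1)⁻¹, rpow_pos_of_pos hε _, fun δ hδ hδδ₀ => ?_⟩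
  have hsmall : δ ^ (r - 1) ≤ ε :=
    calc δ ^ (r - 1) ≤ (ε ^ (r - 1)⁻¹) ^ (r - 1) := rpow_le_rpow hδ.le hδδ₀ (by linarith)
      _ = ε := rpow_inv_rpow hε.le (by linarith)
  calc δ ^ r = δ ^ (r - 1) * δ := by rw [rpow_sub_one hδ.ne', div_mul_cancel₀ _ hδ.ne']
    _ ≤ ε * δ := by gcongr

section modulusTail

variable {c γ δ p ξ : ℝ}

lemma modulusTail_self : modulusTail c γ δ p δ = c := by
  simp [modulusTail]

lemma le_modulusTail (hδ : 0 < δ) (hξ : δ ≤ ξ) (hγ : 0 ≤ γ) (hp : p < 0) :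
    c ≤ modulusTail c γ δ p ξ := by
  have hdecr : ξ ^ p - δ ^ p ≤ 0 := sub_nonpos.2 (rpow_le_rpow_of_nonpos hδ hξ hp.le)
  have : 0 ≤ γ * (ξ ^ p - δ ^ p) / p :=
    div_nonneg_of_nonpos (mul_nonpos_of_nonneg_of_nonpos hγ hdecr) hp.le
  unfold modulusTail
  linarith

lemma mul_rpow_neg_le_modulusTail_mul (hδ : 0 < δ) (hξ : δ ≤ ξ) (hγ : 0 ≤ γ) (hp : p < 0)
    (hc : 0 ≤ c) : c * δ ^ (-p) ≤ modulusTail c γ δ p ξ * ξ ^ (-p) :=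
  mul_le_mul (le_modulusTail hδ hξ hγ hp) (rpow_le_rpow hδ.le hξ (by linarith))
    (rpow_nonneg hδ.le _) (hc.trans (le_modulusTail hδ hξ hγ hp))

lemma modulusTail_two_mul (hξ : 0 ≤ ξ) :
    modulusTail c γ δ p (2 * ξ) = modulusTail c γ δ p ξ + γ * ξ ^ p * ((2 ^ p - 1) / p) := by
  rw [modulusTail, modulusTail, mul_rpow zero_le_two hξ]
  ring

lemma modulusTail_two_mul_le (hξ : 0 < ξ) (hγ : 0 ≤ γ) (hp : p < 0)
    (hbound : 3 / 2 * γ ≤ modulusTail c γ δ p ξ * ξ ^ (-p)) :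
    modulusTail c γ δ p (2 * ξ) ≤ 3 / 2 * modulusTail c γ δ p ξ := by
  have hincr : 0 ≤ γ * ξ ^ p := mul_nonneg hγ (rpow_nonneg hξ.le _)
  have hhalf : 3 / 2 * (γ * ξ ^ p) ≤ modulusTail c γ δ p ξ := by
    calc 3 / 2 * (γ * ξ ^ p) = 3 / 2 * γ * ξ ^ p := by ring
      _ ≤ modulusTail c γ δ p ξ * ξ ^ (-p) * ξ ^ p := by gcongr
      _ = modulusTail c γ δ p ξ := by
        rw [mul_assoc, ← rpow_add hξ, neg_add_cancel, rpow_zero, mul_one]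
  calc modulusTail c γ δ p (2 * ξ)
      = modulusTail c γ δ p ξ + γ * ξ ^ p * ((2 ^ p - 1) / p) := modulusTail_two_mul hξ.le
    _ ≤ modulusTail c γ δ p ξ + γ * ξ ^ p * log 2 := by
      gcongr
      exact rpow_sub_one_div_le_log two_pos hp
    _ ≤ 3 / 2 * modulusTail c γ δ p ξ := by
      nlinarith [log_two_lt_d9]

end modulusTail

theorem subcritical_large_scale_bounds_general (r α β : ℝ) (hr1 : 1 < r)
    (hαβ1 : 1 < α + β) :
    ∃ δ₀ : ℝ, 0 < δ₀ ∧ ∀ δ γ : ℝ, 0 < δ → δ ≤ δ₀ → 0 < γ →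
      γ ≤ δ ^ (2 * α + 2 * β - 1) / 2 →
      let ω : ℝ → ℝ := fun ξ =>
        if ξ ≤ δ then ξ - ξ ^ r
        else (δ - δ ^ r) + γ * (ξ ^ (2 - 2 * α - 2 * β) - δ ^ (2 - 2 * α - 2 * β)) /
          (2 - 2 * α - 2 * β)
      ∀ ξ : ℝ, δ ≤ ξ →
        γ ≤ ω ξ * ξ ^ (2 * β + 2 * α - 2) ∧ ω (2 * ξ) ≤ (3 / 2) * ω ξ := by
  obtain ⟨δ₀, hδ₀, hsmall⟩ := exists_pos_forall_rpow_le_mul hr1 (by norm_num : (0 : ℝ) < 1 / 4)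
  refine ⟨δ₀, hδ₀, ?_⟩
  intro δ γ hδ hδδ₀ hγ hγδ ω ξ hξ
  have hp : 2 - 2 * α - 2 * β < 0 := by linarith
  have hω : ∀ x, δ ≤ x → ω x = modulusTail (δ - δ ^ r) γ δ (2 - 2 * α - 2 * β) x := by
    intro x hx
    rcases hx.eq_or_lt with rfl | hlt
    · simp only [ω, le_refl, if_true, modulusTail_self]
    · exact if_neg hlt.not_ge
  have hc : 3 / 4 * δ ≤ δ - δ ^ r := by linarith [hsmall δ hδ hδδ₀]
  have hbound : 3 / 2 * γ ≤ ω ξ * ξ ^ (-(2 - 2 * α - 2 * β)) :=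
    calc 3 / 2 * γ ≤ 3 / 4 * δ * δ ^ (-(2 - 2 * α - 2 * β)) := by
          rw [mul_assoc, ← rpow_one_add' hδ.le (by linarith)]
          convert (by linarith : 3 / 2 * γ ≤ 3 / 4 * δ ^ (2 * α + 2 * β - 1)) using 3
          ring
      _ ≤ (δ - δ ^ r) * δ ^ (-(2 - 2 * α - 2 * β)) := by gcongr
      _ ≤ ω ξ * ξ ^ (-(2 - 2 * α - 2 * β)) := by
          rw [hω ξ hξ]
          exact mul_rpow_neg_le_modulusTail_mul hδ hξ hγ.le hp (by linarith)
  rw [show 2 * β + 2 * α - 2 = -(2 - 2 * α - 2 * β) by ring]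
  refine ⟨by linarith, ?_⟩
  rw [hω ξ hξ] at hbound ⊢
  rw [hω (2 * ξ) (by linarith)]
  exact modulusTail_two_mul_le (by linarith) hγ.le hp hbound

theorem subcritical_large_scale_bounds (r α β : ℝ) (hr1 : 1 < r) (hr2 : r < 2)
    (hα1 : 1 / 2 < α) (hα2 : α < 1) (hβ1 : 1 / 2 < β) (hβ2 : β < 1)
    (hαβ1 : 1 < α + β) (hαβ2 : α + β < 3 / 2) :
    ∃ δ₀ : ℝ, 0 < δ₀ ∧ ∀ δ γ : ℝ, 0 < δ → δ ≤ δ₀ → 0 < γ →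
      γ ≤ δ ^ (2 * α + 2 * β - 1) / 2 →
      let ω : ℝ → ℝ := fun ξ =>
        if ξ ≤ δ then ξ - ξ ^ r
        else (δ - δ ^ r) + γ * (ξ ^ (2 - 2 * α - 2 * β) - δ ^ (2 - 2 * α - 2 * β)) /
          (2 - 2 * α - 2 * β)
      ∀ ξ : ℝ, δ ≤ ξ →
        γ ≤ ω ξ * ξ ^ (2 * β + 2 * α - 2) ∧ ω (2 * ξ) ≤ (3 / 2) * ω ξ :=
  subcritical_large_scale_bounds_general r α β hr1 hαβ1
end

section
/- Let ω : [0, ∞) → [0, ∞) be increasing with ω(0) = 0, α ∈ (0, 1), ξ > 0, and suppose ω(2ξ) ≤ 2ω(ξ). Then ∫_{ξ/2}^{∞} [ω(2η + ξ) − ω(2η − ξ) − 2ω(ξ)] / η^{1+2α} dη ≤ −c ω(ξ) ξ^{−2α} for some constant c = c(α) > 0, using that ω(2η+ξ) − ω(2η−ξ) ≤ ω(2ξ) for η ≥ ξ/2 by concavity. -/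
/-!
Concavity and `ω 0 = 0` make `ω` subadditive, so for `η > ξ / 2` the increment
`ω (2η + ξ) - ω (2η - ξ)` lies between `0` (monotonicity) and `ω (2ξ) ≤ (3/2) ω ξ`.
The integrand is therefore bounded by a multiple of `η ^ (-(1 + 2α))`, which is integrable at
infinity, and lies below `-(1/2) ω ξ · η ^ (-(1 + 2α))`, whose integral is explicit.
-/

open MeasureTheory Set

theorem ConcaveOn.mul_map_le_map_mul {f : ℝ → ℝ} (hf : ConcaveOn ℝ (Ici 0) f) (h0 : 0 ≤ f 0)
    {t x : ℝ} (ht₀ : 0 ≤ t) (ht₁ : t ≤ 1) (hx : 0 ≤ x) : t * f x ≤ f (t * x) := by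
  have h := hf.2 self_mem_Ici (mem_Ici.2 hx) (sub_nonneg.2 ht₁) ht₀ (sub_add_cancel 1 t)
  simp only [smul_eq_mul, mul_zero, zero_add] at h
  nlinarith [mul_nonneg (sub_nonneg.2 ht₁) h0]

theorem ConcaveOn.map_add_le {f : ℝ → ℝ} (hf : ConcaveOn ℝ (Ici 0) f) (h0 : 0 ≤ f 0)
    {a b : ℝ} (ha : 0 ≤ a) (hb : 0 ≤ b) : f (a + b) ≤ f a + f b := by
  rcases (add_nonneg ha hb).eq_or_lt with hab | hab
  · obtain ⟨rfl, rfl⟩ : a = 0 ∧ b = 0 := ⟨by linarith, by linarith⟩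
    simpa using h0
  have key : ∀ {u : ℝ}, 0 ≤ u → u ≤ a + b → u / (a + b) * f (a + b) ≤ f u := fun hu hu' => by
    simpa [div_mul_cancel₀ _ hab.ne'] using hf.mul_map_le_map_mul h0 (div_nonneg hu hab.le)
      ((div_le_one hab).2 hu') (add_nonneg ha hb)
  have hsum : a / (a + b) * f (a + b) + b / (a + b) * f (a + b) = f (a + b) := by
    field_simp
  linarith [key ha (le_add_of_nonneg_right hb), key hb (le_add_of_nonneg_left ha)]

section RpowTail

variable {g : ℝ → ℝ} {c s : ℝ}

theorem integrableOn_Ioi_div_rpow_of_abs_le (hc : 0 < c) (hs : 1 < s)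
    (hg : AEStronglyMeasurable g (volume.restrict (Ioi c))) {M : ℝ}
    (hgM : ∀ η ∈ Ioi c, |g η| ≤ M) : IntegrableOn (fun η => g η / η ^ s) (Ioi c) := by
  have hpow : ContinuousOn (fun η : ℝ => η ^ s) (Ioi c) :=
    continuousOn_id.rpow_const fun η hη => Or.inl (hc.trans hη).ne'
  refine ((integrableOn_Ioi_rpow_of_lt (neg_lt_neg hs) hc).const_mul M).mono'
    (hg.div₀ (hpow.aestronglyMeasurable measurableSet_Ioi)) ?_
  filter_upwards [ae_restrict_mem measurableSet_Ioi] with η hη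
  have hη₀ : 0 < η := hc.trans hη
  rw [norm_div, Real.norm_eq_abs, Real.norm_of_nonneg (Real.rpow_nonneg hη₀.le s),
    Real.rpow_neg hη₀.le, ← div_eq_mul_inv]
  exact div_le_div_of_nonneg_right (hgM η hη) (Real.rpow_nonneg hη₀.le s)

theorem setIntegral_Ioi_div_rpow_le (hc : 0 < c) (hs : 1 < s)
    (hg : AEStronglyMeasurable g (volume.restrict (Ioi c))) {M B : ℝ}
    (hgM : ∀ η ∈ Ioi c, |g η| ≤ M) (hgB : ∀ η ∈ Ioi c, g η ≤ B) :
    ∫ η in Ioi c, g η / η ^ s ≤ B * c ^ (1 - s) / (s - 1) := by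
  have hint := integrableOn_Ioi_rpow_of_lt (neg_lt_neg hs) hc
  calc ∫ η in Ioi c, g η / η ^ s
      ≤ ∫ η in Ioi c, B * η ^ (-s) := by
        refine setIntegral_mono_on (integrableOn_Ioi_div_rpow_of_abs_le hc hs hg hgM)
          (hint.const_mul B) measurableSet_Ioi fun η hη => ?_
        have hη₀ : 0 < η := hc.trans hη
        rw [Real.rpow_neg hη₀.le, ← div_eq_mul_inv]
        exact div_le_div_of_nonneg_right (hgB η hη) (Real.rpow_nonneg hη₀.le s)
    _ = B * c ^ (1 - s) / (s - 1) := by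
        rw [integral_const_mul, integral_Ioi_rpow_of_lt (neg_lt_neg hs) hc, neg_add_eq_sub,
          ← neg_sub s 1, div_neg, neg_div, neg_neg, mul_div_assoc]

end RpowTail

theorem dissipation_large_scale_general (ω : ℝ → ℝ) (α ξ : ℝ)
    (hmono : MonotoneOn ω (Set.Ici 0)) (hconc : ConcaveOn ℝ (Set.Ici 0) ω)
    (h0 : ω 0 = 0) (hα1 : 0 < α) (hξ : 0 < ξ)
    (hdouble : ω (2 * ξ) ≤ (3 / 2) * ω ξ) :
    (∫ η in Set.Ioi (ξ / 2), (ω (2 * η + ξ) - ω (2 * η - ξ) - 2 * ω ξ) / η ^ (1 + 2 * α)) ≤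
      -(1 / 2) * ω ξ * (ξ / 2) ^ (-(2 * α)) / (2 * α) := by
  have hωξ : 0 ≤ ω ξ := h0 ▸ hmono self_mem_Ici hξ.le hξ.le
  have hcomp {u : ℝ → ℝ} (hu : Monotone u) (hmaps : MapsTo u (Ioi (ξ / 2)) (Ici 0)) :
      AEMeasurable (ω ∘ u) (volume.restrict (Ioi (ξ / 2))) :=
    aemeasurable_restrict_of_monotoneOn measurableSet_Ioi (hmono.comp (hu.monotoneOn _) hmaps)
  have hmeas : AEStronglyMeasurable (fun η => ω (2 * η + ξ) - ω (2 * η - ξ) - 2 * ω ξ)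
      (volume.restrict (Ioi (ξ / 2))) := by
    have hplus := hcomp (u := fun η => 2 * η + ξ) (fun _ _ h => by linarith)
      fun η hη => by simp only [mem_Ici]; linarith [mem_Ioi.1 hη]
    have hminus := hcomp (u := fun η => 2 * η - ξ) (fun _ _ h => by linarith)
      fun η hη => by simp only [mem_Ici]; linarith [mem_Ioi.1 hη]
    exact ((hplus.sub hminus).sub aemeasurable_const).aestronglyMeasurable
  have hincr : ∀ η ∈ Ioi (ξ / 2),
      0 ≤ ω (2 * η + ξ) - ω (2 * η - ξ) ∧ ω (2 * η + ξ) - ω (2 * η - ξ) ≤ ω (2 * ξ) := by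
    intro η hη
    have hx : 0 ≤ 2 * η - ξ := by linarith [mem_Ioi.1 hη]
    refine ⟨sub_nonneg.2 (hmono hx (by linarith : (0 : ℝ) ≤ 2 * η + ξ) (by linarith)), ?_⟩
    have := hconc.map_add_le h0.ge hx (by linarith : 0 ≤ 2 * ξ)
    rw [show 2 * η - ξ + 2 * ξ = 2 * η + ξ by ring] at this
    linarith
  calc _ ≤ -(1 / 2) * ω ξ * (ξ / 2) ^ (1 - (1 + 2 * α)) / (1 + 2 * α - 1) :=
        setIntegral_Ioi_div_rpow_le (half_pos hξ) (by linarith) hmeas (M := 2 * ω ξ)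
          (fun η hη => abs_le.2 ⟨by linarith [hincr η hη], by linarith [hincr η hη]⟩)
          (fun η hη => by linarith [hincr η hη])
    _ = _ := by rw [sub_add_cancel_left, add_sub_cancel_left]

theorem dissipation_large_scale (ω : ℝ → ℝ) (α ξ : ℝ)
    (hmono : MonotoneOn ω (Set.Ici 0)) (hconc : ConcaveOn ℝ (Set.Ici 0) ω)
    (h0 : ω 0 = 0) (hα1 : 0 < α) (hα2 : α < 1) (hξ : 0 < ξ)
    (hdouble : ω (2 * ξ) ≤ (3 / 2) * ω ξ) :
    (∫ η in Set.Ioi (ξ / 2), (ω (2 * η + ξ) - ω (2 * η - ξ) - 2 * ω ξ) / η ^ (1 + 2 * α)) ≤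
      -(1 / 2) * ω ξ * (ξ / 2) ^ (-(2 * α)) / (2 * α) :=
  dissipation_large_scale_general ω α ξ hmono hconc h0 hα1 hξ hdouble
end
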